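/- Consider a balanced assortative BTSBM (p_0 > p_1 > … > p_d) with K = 2^d communities of size m = n/K, in the scaling parametrization (p_0,…,p_d) = ρ_n(1, a_1, …, a_d). Then the eigenvalue of P̃ = Z B Z^T of second largest absolute value equals λ_2 = n ρ_n (1 + Σ_{i=1}^{d−1} 2^{i−1} a_i − 2^{d−1} a_d)/K = n ρ_n ((1 − a_d) + Σ_{i=1}^{d−1} 2^{i−1}(a_i − a_d))/K, and it satisfies λ_2 ≥ n ρ_n (a_{d−1} − a_d)/2 ≥ n ρ_n η_d, where η_d = min{a_d, (a_{d−1} − a_d)/2}. -/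

import Mathlib

open Finset Matrix

namespace BTSBM

/-- 0-based index of the first coordinate where two binary strings differ. -/
noncomputable def firstDiff {d : ℕ} (x y : Fin d → Bool) : ℕ :=
  sInf {q : ℕ | ∃ h : q < d, x ⟨q, h⟩ ≠ y ⟨q, h⟩}

/-- The BTSBM community connection matrix `B`: off-diagonal entries are
`p (D x y)` where `D x y = d + 1 - s x y` and `s` is the 1-based first index of
disagreement, so that `D x y = d - firstDiff x y`; diagonal entries are `p 0`. -/
noncomputable def Bmat (d : ℕ) (p : ℕ → ℝ) :
    Matrix (Fin d → Bool) (Fin d → Bool) ℝ :=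
  Matrix.of fun x y => if x = y then p 0 else p (d - firstDiff x y)

/-- The membership matrix `Z`. -/
def Zmat (n d : ℕ) (c : Fin n → Fin d → Bool) : Matrix (Fin n) (Fin d → Bool) ℝ :=
  Matrix.of fun i x => if c i = x then 1 else 0

/-- `P̃ = Z B Zᵀ`. -/
noncomputable def Ptil (n d : ℕ) (p : ℕ → ℝ) (c : Fin n → Fin d → Bool) :
    Matrix (Fin n) (Fin n) ℝ :=
  Zmat n d c * Bmat d p * (Zmat n d c)ᵀ

/-- Every community has exactly `m` nodes. -/
def Balanced (n d m : ℕ) (c : Fin n → Fin d → Bool) : Prop :=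
  ∀ x : Fin d → Bool, (Finset.univ.filter fun i => c i = x).card = m

/-- The eigenvalue formulas `λ_{d,q}` of `B`. -/
noncomputable def lamB (d : ℕ) (p : ℕ → ℝ) (q : ℕ) : ℝ :=
  if q = 0 then p 0 + ∑ r ∈ Finset.Icc 1 d, 2 ^ (r - 1) * p r
  else p 0 + (∑ r ∈ Finset.Icc 1 (d - q), 2 ^ (r - 1) * p r) - 2 ^ (d - q) * p (d - q + 1)

/-- `μ` is an eigenvalue of second largest absolute value of `M`: there is a top
eigenvalue `μ₁` (of largest absolute value among all eigenvalues, with multiplicity),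
and after removing one copy of `μ₁`, `μ` has the largest absolute value among the
remaining eigenvalues. -/
def IsSecondAbsEigenval {N : ℕ} (M : Matrix (Fin N) (Fin N) ℝ) (μ : ℝ) : Prop :=
  ∃ μ₁ ∈ M.charpoly.roots, (∀ ν ∈ M.charpoly.roots, |ν| ≤ |μ₁|) ∧
    μ ∈ M.charpoly.roots.erase μ₁ ∧ ∀ ν ∈ M.charpoly.roots.erase μ₁, |ν| ≤ |μ|

/-! ### Auxiliary definitions -/

def sgn (b : Bool) : ℝ := if b then -1 else 1

@[simp] lemma sgn_false : sgn false = 1 := rfl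
@[simp] lemma sgn_true : sgn true = -1 := rfl

/-- character matrix -/
noncomputable def Hmat (d : ℕ) : Matrix (Fin d → Bool) (Fin d → Bool) ℝ :=
  Matrix.of fun x w => ∏ i, sgn (x i && w i)

/-- the all-zero string -/
def zv (d : ℕ) : Fin d → Bool := fun _ => false

/-- eigenvalues of B, indexed by characters -/
noncomputable def lam (d : ℕ) (p : ℕ → ℝ) (w : Fin d → Bool) : ℝ :=
  ∑ z, Bmat d p (zv d) z * Hmat d z w

/-! ### rectangular charpoly commutation -/

open Polynomial in
lemma charmatrix_eq {κ : Type*} [Fintype κ] [DecidableEq κ] (M : Matrix κ κ ℝ) :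
    charmatrix M = (X : ℝ[X]) • (1 : Matrix κ κ ℝ[X]) - M.map C := by
  ext i j
  by_cases h : i = j <;>
    simp [charmatrix_apply, diagonal_apply, h, Matrix.one_apply, coeff_sub, coeff_neg]

open Polynomial in
lemma charpoly_rect {n : ℕ} {ι : Type*} [Fintype ι] [DecidableEq ι]
    (A : Matrix (Fin n) ι ℝ) (B : Matrix ι (Fin n) ℝ) :
    (A * B).charpoly * X ^ (Fintype.card ι) = (B * A).charpoly * X ^ n := by
  classical
  set Ap : Matrix (Fin n) ι ℝ[X] := A.map C with hAp
  set Bp : Matrix ι (Fin n) ℝ[X] := B.map C with hBp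
  set W : Matrix (Fin n ⊕ ι) (Fin n ⊕ ι) ℝ[X] :=
    fromBlocks ((X : ℝ[X]) • 1) Ap Bp 1 with hW
  set N : Matrix (Fin n ⊕ ι) (Fin n ⊕ ι) ℝ[X] :=
    fromBlocks 1 Ap Bp ((X : ℝ[X]) • 1) with hN
  have hdetW : W.det = (A * B).charpoly := by
    have : W * fromBlocks 1 0 (-Bp) 1 =
        fromBlocks ((X : ℝ[X]) • 1 - Ap * Bp) Ap 0 1 := by
      rw [hW, fromBlocks_multiply]
      congr 1 <;> simp [Matrix.mul_smul, Matrix.smul_mul, sub_eq_add_neg, add_comm]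
    have hd := congrArg Matrix.det this
    rw [det_mul, det_fromBlocks_zero₁₂, det_fromBlocks_zero₂₁] at hd
    simp only [det_one, mul_one, one_mul] at hd
    rw [hd, Matrix.charpoly, charmatrix_eq, Matrix.map_mul]
  have hdetN : N.det = (B * A).charpoly := by
    have : N * fromBlocks 1 (-Ap) 0 1 =
        fromBlocks 1 0 Bp ((X : ℝ[X]) • 1 - Bp * Ap) := by
      rw [hN, fromBlocks_multiply]
      congr 1 <;> simp [Matrix.mul_smul, Matrix.smul_mul, sub_eq_add_neg, add_comm]
    have hd := congrArg Matrix.det this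
    rw [det_mul, det_fromBlocks_zero₂₁, det_fromBlocks_zero₁₂] at hd
    simp only [det_one, mul_one, one_mul] at hd
    rw [hd, Matrix.charpoly, charmatrix_eq, Matrix.map_mul]
  have key : W * fromBlocks 1 0 0 ((X : ℝ[X]) • 1)
      = fromBlocks ((X : ℝ[X]) • 1) 0 0 1 * N := by
    rw [hW, hN, fromBlocks_multiply, fromBlocks_multiply]
    congr 1 <;> simp [Matrix.mul_smul, Matrix.smul_mul, sub_eq_add_neg, add_comm]
  have hd := congrArg Matrix.det key
  rw [det_mul, det_mul, det_fromBlocks_zero₂₁, det_fromBlocks_zero₁₂] at hd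
  simp only [det_one, mul_one, one_mul, det_smul, Fintype.card_fin] at hd
  rw [hdetW, hdetN, mul_comm ((X:ℝ[X]) ^ n)] at hd
  exact hd

/-! ### sum-product identity and orthogonality -/

lemma sum_prod_eq {d : ℕ} (g : Fin d → Bool → ℝ) :
    ∑ y : Fin d → Bool, ∏ i, g i (y i) = ∏ i, (g i false + g i true) := by
  rw [← Fintype.piFinset_univ, ← Finset.prod_univ_sum]
  congr 1; ext i; simp [Finset.sum_ite_eq, add_comm]

@[simp] lemma Hmat_zv (d : ℕ) (w : Fin d → Bool) : Hmat d (zv d) w = 1 := by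
  simp [Hmat, zv]

lemma HH (d : ℕ) : Hmat d * Hmat d = ((2^d : ℕ) : ℝ) • 1 := by
  ext x z
  rw [Matrix.mul_apply]
  have h1 : ∀ y : Fin d → Bool, Hmat d x y * Hmat d y z
      = ∏ i, (sgn (x i && y i) * sgn (y i && z i)) := by
    intro y; rw [Hmat]; simp only [Matrix.of_apply]
    rw [← Finset.prod_mul_distrib]
  simp_rw [h1]
  rw [sum_prod_eq (fun i b => sgn (x i && b) * sgn (b && z i))]
  by_cases h : x = z
  · subst h
    have h2 : ∀ i, sgn (x i && false) * sgn (false && x i)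
        + sgn (x i && true) * sgn (true && x i) = 2 := by
      intro i; cases (x i) <;> norm_num
    rw [Finset.prod_congr rfl (fun i _ => h2 i)]
    simp [Matrix.one_apply, Finset.prod_const]
  · obtain ⟨i, hi⟩ : ∃ i, x i ≠ z i := by
      by_contra hc; push_neg at hc; exact h (funext hc)
    rw [Finset.prod_eq_zero (Finset.mem_univ i)]
    · simp [Matrix.one_apply, h]
    · cases hx : (x i) <;> cases hz : (z i) <;> simp_all

lemma sgn_xor (a b w : Bool) : sgn (xor a b && w) = sgn (a && w) * sgn (b && w) := by
  cases a <;> cases b <;> cases w <;> norm_num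

lemma Hmat_xor (d : ℕ) (x y w : Fin d → Bool) :
    Hmat d (fun i => xor (x i) (y i)) w = Hmat d x w * Hmat d y w := by
  simp only [Hmat, Matrix.of_apply]
  rw [← Finset.prod_mul_distrib]
  exact Finset.prod_congr rfl fun i _ => sgn_xor _ _ _

/-! ### diagonalization of B -/

lemma BH (d : ℕ) (p : ℕ → ℝ) :
    Bmat d p * Hmat d = Hmat d * Matrix.diagonal (lam d p) := by
  ext x w
  rw [Matrix.mul_apply, Matrix.mul_diagonal]
  have hinv : Function.Involutive (fun (y : Fin d → Bool) => fun i => xor (x i) (y i)) := by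
    intro y; funext i; simp [Bool.xor_assoc]
  rw [← Function.Bijective.sum_comp hinv.bijective (fun y => Bmat d p x y * Hmat d y w)]
  have key : ∀ y, Bmat d p x (fun i => xor (x i) (y i)) * Hmat d (fun i => xor (x i) (y i)) w
      = Hmat d x w * (Bmat d p (zv d) y * Hmat d y w) := by
    intro y
    have h1 : Bmat d p x (fun i => xor (x i) (y i)) = Bmat d p (zv d) y := by
      simp only [Bmat, Matrix.of_apply]
      have hxy : (x = fun i => xor (x i) (y i)) ↔ zv d = y := by
        constructor
        · intro h; funext i
          have h2 : x i = xor (x i) (y i) := congrFun h i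
          cases hxi : x i <;> cases hyi : y i <;> simp [hxi, hyi, zv] at h2 ⊢
        · intro h; funext i
          have h2 : y i = false := (congrFun h i).symm
          simp [h2]
      have hfd : firstDiff x (fun i => xor (x i) (y i)) = firstDiff (zv d) y := by
        unfold firstDiff
        congr 1
        ext q
        refine exists_congr fun h => ?_
        cases hxi : x ⟨q, h⟩ <;> cases hyi : y ⟨q, h⟩ <;> simp [hxi, hyi, zv]
      by_cases h : zv d = y
      · rw [if_pos (hxy.mpr h), if_pos h]
      · rw [if_neg (fun hc => h (hxy.mp hc)), if_neg h, hfd]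
    rw [h1, Hmat_xor]
    ring
  rw [Finset.sum_congr rfl (fun y _ => key y), ← Finset.mul_sum]
  rfl

/-! ### first-disagreement combinatorics -/

lemma hset_eq {d : ℕ} (z : Fin d → Bool) :
    {q : ℕ | ∃ h : q < d, zv d ⟨q, h⟩ ≠ z ⟨q, h⟩}
      = {q : ℕ | ∃ h : q < d, z ⟨q, h⟩ = true} := by
  ext q; refine exists_congr fun h => ?_
  cases hz : z ⟨q, h⟩ <;> simp [zv, hz]

lemma nonempty_of_ne_zv {d : ℕ} {z : Fin d → Bool} (hz : z ≠ zv d) :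
    {q : ℕ | ∃ h : q < d, z ⟨q, h⟩ = true}.Nonempty := by
  by_contra hc
  rw [Set.not_nonempty_iff_eq_empty] at hc
  apply hz; funext i
  cases hzi : z i
  · rfl
  · exfalso
    have : (i : ℕ) ∈ {q : ℕ | ∃ h : q < d, z ⟨q, h⟩ = true} := ⟨i.isLt, by simpa using hzi⟩
    simp [hc] at this

lemma firstDiff_zv_lt {d : ℕ} {z : Fin d → Bool} (hz : z ≠ zv d) :
    firstDiff (zv d) z < d := by
  rw [firstDiff, hset_eq]
  obtain ⟨h, -⟩ := Nat.sInf_mem (nonempty_of_ne_zv hz)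
  exact h

lemma firstDiff_zv_eq_iff {d : ℕ} (z : Fin d → Bool) (j : Fin d) :
    (z ≠ zv d ∧ firstDiff (zv d) z = (j : ℕ)) ↔
      (z j = true ∧ ∀ i : Fin d, (i : ℕ) < (j : ℕ) → z i = false) := by
  constructor
  · rintro ⟨hz, hfd⟩
    rw [firstDiff, hset_eq] at hfd
    have hmem := Nat.sInf_mem (nonempty_of_ne_zv hz)
    constructor
    · obtain ⟨h, hq⟩ := hmem
      have hjeq : (⟨sInf {q : ℕ | ∃ h : q < d, z ⟨q, h⟩ = true}, h⟩ : Fin d) = j :=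
        Fin.ext hfd
      exact hjeq ▸ hq
    · intro i hi
      cases hzi : z i
      · rfl
      · exfalso
        have hmem2 : (i : ℕ) ∈ {q : ℕ | ∃ h : q < d, z ⟨q, h⟩ = true} :=
          ⟨i.isLt, by simpa using hzi⟩
        have := Nat.sInf_le hmem2
        omega
  · rintro ⟨hj, hlow⟩
    have hzne : z ≠ zv d := by
      intro hc; rw [hc] at hj; simp [zv] at hj
    refine ⟨hzne, ?_⟩
    rw [firstDiff, hset_eq]
    have hmem : (j : ℕ) ∈ {q : ℕ | ∃ h : q < d, z ⟨q, h⟩ = true} :=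
      ⟨j.isLt, by simpa using hj⟩
    have hub := Nat.sInf_le hmem
    rcases Nat.lt_or_ge (sInf {q : ℕ | ∃ h : q < d, z ⟨q, h⟩ = true}) (j : ℕ) with hlt | hge
    · exfalso
      obtain ⟨h, hq⟩ := Nat.sInf_mem (Set.nonempty_of_mem hmem)
      have := hlow ⟨_, h⟩ hlt
      simp [this] at hq
    · omega

noncomputable def fIdxF {d : ℕ} (hd : 1 ≤ d) (z : Fin d → Bool) : Fin d :=
  if h : firstDiff (zv d) z < d then ⟨_, h⟩ else ⟨0, hd⟩

lemma fiber_eq {d : ℕ} (hd : 1 ≤ d) (j : Fin d) :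
    (Finset.univ.erase (zv d)).filter (fun z => fIdxF hd z = j)
      = Finset.univ.filter
          (fun z : Fin d → Bool => z j = true ∧ ∀ i : Fin d, (i : ℕ) < (j : ℕ) → z i = false) := by
  ext z
  simp only [Finset.mem_filter, Finset.mem_erase, Finset.mem_univ, true_and, and_true]
  rw [← firstDiff_zv_eq_iff]
  constructor
  · rintro ⟨hz, hfj⟩
    refine ⟨hz, ?_⟩
    rw [fIdxF, dif_pos (firstDiff_zv_lt hz)] at hfj
    exact congrArg Fin.val hfj
  · rintro ⟨hz, hfd⟩
    refine ⟨hz, ?_⟩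
    rw [fIdxF, dif_pos (firstDiff_zv_lt hz)]
    exact Fin.ext hfd

lemma lam_formula {d : ℕ} (hd : 1 ≤ d) (p : ℕ → ℝ) (w : Fin d → Bool) :
    lam d p w = p 0 + ∑ j : Fin d, p (d - (j : ℕ)) *
      (sgn (w j) * ∏ i ∈ Finset.Ioi j, (1 + sgn (w i))) := by
  rw [lam, ← Finset.sum_erase_add _ _ (Finset.mem_univ (zv d))]
  have hdiag : Bmat d p (zv d) (zv d) * Hmat d (zv d) w = p 0 := by
    simp [Bmat, Hmat, zv]
  rw [hdiag, add_comm]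
  congr 1
  rw [← Finset.sum_fiberwise_of_maps_to (g := fIdxF hd)
      (fun z _ => Finset.mem_univ _) (fun z => Bmat d p (zv d) z * Hmat d z w)]
  refine Finset.sum_congr rfl fun j _ => ?_
  have hfiber : ∀ z ∈ (Finset.univ.erase (zv d)).filter (fun z => fIdxF hd z = j),
      Bmat d p (zv d) z * Hmat d z w = p (d - (j:ℕ)) * Hmat d z w := by
    intro z hz
    simp only [Finset.mem_filter, Finset.mem_erase, Finset.mem_univ, true_and, and_true] at hz
    obtain ⟨hzne, hfj⟩ := hz
    rw [fIdxF, dif_pos (firstDiff_zv_lt hzne)] at hfj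
    have hfd : firstDiff (zv d) z = (j : ℕ) := congrArg Fin.val hfj
    rw [Bmat, Matrix.of_apply, if_neg (fun hc => hzne hc.symm), hfd]
  rw [Finset.sum_congr rfl hfiber, ← Finset.mul_sum]
  congr 1
  rw [fiber_eq hd j]
  set G : Fin d → Bool → ℝ := fun i b =>
    if (i : ℕ) < (j : ℕ) then (if b then 0 else 1)
    else if i = j then (if b then sgn (w i) else 0) else sgn (b && w i) with hG
  have step1 : ∑ z ∈ Finset.univ.filter
        (fun z : Fin d → Bool => z j = true ∧ ∀ i : Fin d, (i : ℕ) < (j : ℕ) → z i = false),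
      Hmat d z w = ∑ z : Fin d → Bool, ∏ i, G i (z i) := by
    rw [Finset.sum_filter]
    refine Finset.sum_congr rfl fun z _ => ?_
    by_cases hC : z j = true ∧ ∀ i : Fin d, (i : ℕ) < (j : ℕ) → z i = false
    · rw [if_pos hC, Hmat, Matrix.of_apply]
      refine Finset.prod_congr rfl fun i _ => ?_
      rcases lt_trichotomy (i : ℕ) (j : ℕ) with h | h | h
      · have h2 := hC.2 i h
        simp only [hG, if_pos h, h2]
        simp
      · have hij : i = j := Fin.ext h
        have h1 : ¬ (i : ℕ) < (j : ℕ) := by omega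
        simp only [hG, if_neg h1, if_pos hij, hij, hC.1]
        simp
      · have h1 : ¬ (i : ℕ) < (j : ℕ) := by omega
        have h2 : i ≠ j := by intro hc; rw [hc] at h; omega
        simp only [hG, if_neg h1, if_neg h2]
    · rw [if_neg hC]
      push_neg at hC
      by_cases hzj : z j = true
      · obtain ⟨i, hi, hzi⟩ := hC hzj
        refine (Finset.prod_eq_zero (Finset.mem_univ i) ?_).symm
        have hzi' : z i = true := by revert hzi; cases z i <;> simp
        simp only [hG, if_pos hi, hzi']
        simp
      · refine (Finset.prod_eq_zero (Finset.mem_univ j) ?_).symm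
        rw [Bool.not_eq_true] at hzj
        simp only [hG, if_neg (lt_irrefl (j : ℕ)), if_pos rfl, hzj]
        simp
  rw [step1, sum_prod_eq]
  have hval : ∀ i : Fin d, G i false + G i true =
      (if (i : ℕ) < (j : ℕ) then 1 else if i = j then sgn (w i) else 1 + sgn (w i)) := by
    intro i
    rcases lt_trichotomy (i : ℕ) (j : ℕ) with h | h | h
    · simp only [hG, if_pos h]
      norm_num
    · have hij : i = j := Fin.ext h
      have h1 : ¬ (i : ℕ) < (j : ℕ) := by omega
      simp [hG, h1, hij]
    · have h1 : ¬ (i : ℕ) < (j : ℕ) := by omega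
      have h2 : i ≠ j := by intro hc; rw [hc] at h; omega
      simp only [hG, if_neg h1, if_neg h2, Bool.false_and, Bool.true_and, sgn_false]
  rw [Finset.prod_congr rfl fun i _ => hval i]
  rw [← Finset.mul_prod_erase _ _ (Finset.mem_univ j)]
  rw [if_neg (lt_irrefl _), if_pos rfl]
  congr 1
  have hsub : Finset.Ioi j ⊆ Finset.univ.erase j := fun i hi => by
    simp only [Finset.mem_erase, Finset.mem_univ, and_true]
    exact Fin.ne_of_gt (Finset.mem_Ioi.mp hi)
  have hone : ∀ i ∈ Finset.univ.erase j, i ∉ Finset.Ioi j →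
      (if (i : ℕ) < (j : ℕ) then 1 else if i = j then sgn (w i) else 1 + sgn (w i)) = 1 := by
    intro i hi hni
    have h1 : ¬ j < i := fun hc => hni (Finset.mem_Ioi.mpr hc)
    have h2 : i ≠ j := (Finset.mem_erase.mp hi).1
    have h3 : (i : ℕ) < (j : ℕ) := by
      rcases lt_trichotomy (i : ℕ) (j : ℕ) with h | h | h
      · exact h
      · exact absurd (Fin.ext h) h2
      · exact absurd h h1
    rw [if_pos h3]
  rw [← Finset.prod_subset hsub hone]
  refine Finset.prod_congr rfl fun i hi => ?_
  have h : j < i := Finset.mem_Ioi.mp hi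
  have h1 : ¬ (i : ℕ) < (j : ℕ) := by
    have := (Fin.lt_iff_val_lt_val.mp h); omega
  have h2 : i ≠ j := Fin.ne_of_gt h
  rw [if_neg h1, if_neg h2]

lemma card_Ioi_fin {d : ℕ} (j : Fin d) : (Finset.Ioi j).card = d - 1 - (j : ℕ) :=
  Fin.card_Ioi j

lemma lam_zv {d : ℕ} (hd : 1 ≤ d) (p : ℕ → ℝ) :
    lam d p (zv d) = lamB d p 0 := by
  rw [lam_formula hd, lamB, if_pos rfl]
  congr 1
  have hterm : ∀ j : Fin d, p (d - (j : ℕ)) *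
      (sgn (zv d j) * ∏ i ∈ Finset.Ioi j, (1 + sgn (zv d i)))
      = 2 ^ (d - 1 - (j : ℕ)) * p (d - (j : ℕ)) := by
    intro j
    have h2 : ∀ i ∈ Finset.Ioi j, (1 + sgn (zv d i)) = 2 := by
      intro i _; simp [zv]; norm_num
    rw [Finset.prod_congr rfl h2, Finset.prod_const, card_Ioi_fin]
    simp [zv]; ring
  rw [Finset.sum_congr rfl fun j _ => hterm j]
  refine Finset.sum_nbij' (fun j : Fin d => d - (j : ℕ))
    (fun r => (⟨d - max r 1, by omega⟩ : Fin d)) ?_ ?_ ?_ ?_ ?_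
  · intro j _; simp only [Finset.mem_Icc]; omega
  · intro r _; exact Finset.mem_univ _
  · intro j _; apply Fin.ext; simp only []; omega
  · intro r hr; simp only [Finset.mem_Icc] at hr; simp only []; omega
  · intro j _
    have h1 : d - 1 - (j : ℕ) = d - (j : ℕ) - 1 := by omega
    rw [h1]

lemma lam_eq_lamB {d : ℕ} (hd : 1 ≤ d) (p : ℕ → ℝ) (w : Fin d → Bool) (ℓ : Fin d)
    (hwℓ : w ℓ = true) (hmax : ∀ i, ℓ < i → w i = false) :
    lam d p w = lamB d p ((ℓ : ℕ) + 1) := by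
  rw [lam_formula hd]
  have hzero : ∀ j ∈ (Finset.univ : Finset (Fin d)), j ∉ Finset.Ici ℓ →
      p (d - (j : ℕ)) * (sgn (w j) * ∏ i ∈ Finset.Ioi j, (1 + sgn (w i))) = 0 := by
    intro j _ hj
    have hjℓ : j < ℓ := by
      simp only [Finset.mem_Ici, not_le] at hj; exact hj
    have h0 : ∏ i ∈ Finset.Ioi j, (1 + sgn (w i)) = 0 := by
      refine Finset.prod_eq_zero (Finset.mem_Ioi.mpr hjℓ) ?_
      rw [hwℓ]; norm_num
    rw [h0]; ring
  rw [← Finset.sum_subset (Finset.subset_univ (Finset.Ici ℓ)) hzero]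
  rw [← Finset.Ioi_insert, Finset.sum_insert (Finset.notMem_Ioi_self)]
  have htℓ : p (d - (ℓ : ℕ)) * (sgn (w ℓ) * ∏ i ∈ Finset.Ioi ℓ, (1 + sgn (w i)))
      = -(2 ^ (d - 1 - (ℓ : ℕ)) * p (d - (ℓ : ℕ))) := by
    have h2 : ∀ i ∈ Finset.Ioi ℓ, (1 + sgn (w i)) = 2 := by
      intro i hi; rw [hmax i (Finset.mem_Ioi.mp hi)]; norm_num
    rw [Finset.prod_congr rfl h2, Finset.prod_const, card_Ioi_fin, hwℓ]
    simp; ring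
  have htail : ∑ j ∈ Finset.Ioi ℓ, p (d - (j : ℕ)) *
      (sgn (w j) * ∏ i ∈ Finset.Ioi j, (1 + sgn (w i)))
      = ∑ r ∈ Finset.Icc 1 (d - ((ℓ : ℕ) + 1)), 2 ^ (r - 1) * p r := by
    have hterm : ∀ j ∈ Finset.Ioi ℓ, p (d - (j : ℕ)) *
        (sgn (w j) * ∏ i ∈ Finset.Ioi j, (1 + sgn (w i)))
        = 2 ^ (d - 1 - (j : ℕ)) * p (d - (j : ℕ)) := by
      intro j hj
      have hℓj : ℓ < j := Finset.mem_Ioi.mp hj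
      have h2 : ∀ i ∈ Finset.Ioi j, (1 + sgn (w i)) = 2 := by
        intro i hi; rw [hmax i (lt_trans hℓj (Finset.mem_Ioi.mp hi))]; norm_num
      rw [Finset.prod_congr rfl h2, Finset.prod_const, card_Ioi_fin,
        hmax j hℓj]
      simp; ring
    rw [Finset.sum_congr rfl hterm]
    refine Finset.sum_nbij' (fun j : Fin d => d - (j : ℕ))
      (fun r => (⟨d - max r 1, by omega⟩ : Fin d)) ?_ ?_ ?_ ?_ ?_
    · intro j hj
      have := Fin.lt_iff_val_lt_val.mp (Finset.mem_Ioi.mp hj)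
      simp only [Finset.mem_Icc]
      have := j.isLt
      omega
    · intro r hr
      simp only [Finset.mem_Icc] at hr
      rw [Finset.mem_Ioi, Fin.lt_iff_val_lt_val]
      simp only []
      have := ℓ.isLt
      omega
    · intro j hj
      have := Fin.lt_iff_val_lt_val.mp (Finset.mem_Ioi.mp hj)
      apply Fin.ext; simp only []
      have := j.isLt
      omega
    · intro r hr; simp only [Finset.mem_Icc] at hr; simp only []; omega
    · intro j hj
      have := Fin.lt_iff_val_lt_val.mp (Finset.mem_Ioi.mp hj)
      have h1 : d - 1 - (j : ℕ) = d - (j : ℕ) - 1 := by omega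
      rw [h1]
  rw [htℓ, htail, lamB, if_neg (by omega)]
  have h1 : d - ((ℓ : ℕ) + 1) + 1 = d - (ℓ : ℕ) := by have := ℓ.isLt; omega
  have h2 : d - ((ℓ : ℕ) + 1) = d - 1 - (ℓ : ℕ) := by omega
  rw [h1, h2]
  ring

end BTSBM
section
open Finset Matrix BTSBM Polynomial
namespace BTSBM

/-! ### Z-matrix and balancedness -/

lemma ZtZ {n d m : ℕ} (c : Fin n → Fin d → Bool) (hbal : Balanced n d m c) :
    (Zmat n d c)ᵀ * Zmat n d c = (m : ℝ) • (1 : Matrix (Fin d → Bool) (Fin d → Bool) ℝ) := by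
  ext x y
  rw [Matrix.mul_apply]
  simp only [Zmat, Matrix.transpose_apply, Matrix.of_apply]
  by_cases h : x = y
  · subst h
    have h1 : ∀ i : Fin n, (if c i = x then (1:ℝ) else 0) * (if c i = x then 1 else 0)
        = if c i = x then 1 else 0 := by
      intro i; by_cases hc : c i = x <;> simp [hc]
    rw [Finset.sum_congr rfl fun i _ => h1 i, Finset.sum_boole, hbal x]
    simp [Matrix.one_apply]
  · have h1 : ∀ i : Fin n, (if c i = x then (1:ℝ) else 0) * (if c i = y then 1 else 0) = 0 := by
      intro i
      by_cases hc : c i = x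
      · rw [if_pos hc, if_neg (fun hc2 => h (hc.symm.trans hc2)), mul_zero]
      · rw [if_neg hc, zero_mul]
    rw [Finset.sum_congr rfl fun i _ => h1 i, Finset.sum_const_zero]
    simp [Matrix.one_apply, h]

/-! ### charpoly of diagonal and similarity -/

lemma charpoly_diagonal {κ : Type*} [Fintype κ] [DecidableEq κ] (v : κ → ℝ) :
    (Matrix.diagonal v).charpoly = ∏ w, (X - C (v w)) := by
  rw [Matrix.charpoly]
  have h1 : charmatrix (Matrix.diagonal v)
      = Matrix.diagonal (fun w => (X : ℝ[X]) - C (v w)) := by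
    ext i j
    by_cases h : i = j <;>
      simp [charmatrix_apply, Matrix.diagonal_apply, h]
  rw [h1, Matrix.det_diagonal]

lemma charpoly_of_mul_eq {κ : Type*} [Fintype κ] [DecidableEq κ]
    (M N H : Matrix κ κ ℝ) (hdet : H.det ≠ 0) (h : M * H = H * N) :
    M.charpoly = N.charpoly := by
  have hp : charmatrix M * H.map C = H.map C * charmatrix N := by
    rw [charmatrix_eq, charmatrix_eq, Matrix.sub_mul, Matrix.mul_sub]
    rw [← Matrix.map_mul, ← Matrix.map_mul, h]
    congr 1
    rw [Matrix.smul_mul, Matrix.one_mul, Matrix.mul_smul, Matrix.mul_one]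
  have hd := congrArg Matrix.det hp
  rw [Matrix.det_mul, Matrix.det_mul] at hd
  have hdm : (H.map (C : ℝ →+* ℝ[X])).det = C H.det := by
    rw [← RingHom.mapMatrix_apply]; exact (RingHom.map_det C H).symm
  rw [hdm, mul_comm] at hd
  exact mul_left_cancel₀ (fun hc => hdet (by simpa using congrArg (fun q => q.coeff 0) hc)) hd

lemma detH_ne_zero (d : ℕ) : (Hmat d).det ≠ 0 := by
  intro hc
  have h1 := congrArg Matrix.det (HH d)
  rw [Matrix.det_mul, hc, mul_zero, Matrix.det_smul, Matrix.det_one, mul_one] at h1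
  have h2 : (((2:ℕ)^d : ℕ) : ℝ) ^ Fintype.card (Fin d → Bool) ≠ 0 := by
    apply pow_ne_zero
    positivity
  exact h2 h1.symm

lemma charpoly_smul_Bmat (d m : ℕ) (p : ℕ → ℝ) :
    ((m : ℝ) • Bmat d p).charpoly = ∏ w : Fin d → Bool, (X - C ((m : ℝ) * lam d p w)) := by
  rw [← charpoly_diagonal]
  refine charpoly_of_mul_eq _ _ (Hmat d) (detH_ne_zero d) ?_
  rw [Matrix.smul_mul, BH]
  have h1 : (fun w => (m:ℝ) * lam d p w) = (m:ℝ) • lam d p := rfl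
  rw [h1, Matrix.diagonal_smul, Matrix.mul_smul]

/-! ### monotonicity of p and ordering of lamB -/

section order
variable {d : ℕ} {p : ℕ → ℝ}

lemma pmono (hassort : ∀ r < d, p (r + 1) < p r) :
    ∀ i j, i ≤ j → j ≤ d → p j ≤ p i := by
  intro i j hij hjd
  induction j with
  | zero =>
    have h0 : i = 0 := Nat.le_zero.mp hij
    simp [h0]
  | succ k ih =>
    rcases Nat.lt_or_ge i (k+1) with h | h
    · have h1 : p (k+1) < p k := hassort k (by omega)
      have h2 : p k ≤ p i := ih (by omega) (by omega)
      linarith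
    · have : i = k + 1 := by omega
      rw [this]

lemma geom_Ioc : ∀ b a : ℕ, a ≤ b → ∑ r ∈ Finset.Ioc a b, (2:ℝ)^(r-1) = 2^b - 2^a := by
  intro b
  induction b with
  | zero => intro a ha; interval_cases a; simp
  | succ k ih =>
    intro a ha
    rcases Nat.lt_or_ge a (k+1) with h | h
    · rw [Finset.sum_Ioc_succ_top (by omega : a ≤ k), ih a (by omega)]
      have : (2:ℝ)^(k+1-1) = 2^k := by norm_num
      rw [this]; ring
    · have : a = k+1 := by omega
      subst this
      simp
end order

end BTSBM
end
section
open Finset Matrix Polynomial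
namespace BTSBM

section order
variable {d : ℕ} {p : ℕ → ℝ}

lemma sum_lb (hd : 1 ≤ d) (hp : ∀ r ≤ d, p r ∈ Set.Icc (0:ℝ) 1)
    (hassort : ∀ r < d, p (r + 1) < p r)
    (a b c : ℕ) (hab : a ≤ b) (hbc : b ≤ c) (hcd : c ≤ d) :
    p c * (2:ℝ)^b - p c * 2^a ≤ ∑ r ∈ Finset.Ioc a b, 2^(r-1) * p r := by
  have h1 : ∀ r ∈ Finset.Ioc a b, (2:ℝ)^(r-1) * p c ≤ 2^(r-1) * p r := by
    intro r hr
    rw [Finset.mem_Ioc] at hr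
    exact mul_le_mul_of_nonneg_left (pmono hassort r c (by omega) hcd) (by positivity)
  calc p c * (2:ℝ)^b - p c * 2^a = (∑ r ∈ Finset.Ioc a b, (2:ℝ)^(r-1)) * p c := by
        rw [geom_Ioc b a hab]; ring
    _ = ∑ r ∈ Finset.Ioc a b, (2:ℝ)^(r-1) * p c := by rw [Finset.sum_mul]
    _ ≤ _ := Finset.sum_le_sum h1

lemma Icc_one_eq_Ioc (t : ℕ) : Finset.Icc 1 t = Finset.Ioc 0 t := by
  ext r; simp [Finset.mem_Icc, Finset.mem_Ioc]; omega

lemma S_split (a b : ℕ) (hab : a ≤ b) :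
    ∑ r ∈ Finset.Icc 1 b, (2:ℝ)^(r-1) * p r
      = (∑ r ∈ Finset.Icc 1 a, (2:ℝ)^(r-1) * p r)
        + ∑ r ∈ Finset.Ioc a b, (2:ℝ)^(r-1) * p r := by
  rw [Icc_one_eq_Ioc, Icc_one_eq_Ioc]
  exact (Finset.sum_Ioc_consecutive _ (Nat.zero_le a) hab).symm

variable (hd : 1 ≤ d) (hp : ∀ r ≤ d, p r ∈ Set.Icc (0:ℝ) 1)
  (hassort : ∀ r < d, p (r + 1) < p r)
include hd hp hassort

lemma lamB_one_eq : lamB d p 1 = p 0 + (∑ r ∈ Finset.Icc 1 (d - 1), (2:ℝ)^(r-1) * p r)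
    - 2^(d-1) * p d := by
  rw [lamB, if_neg one_ne_zero]
  have h1 : d - 1 + 1 = d := by omega
  rw [h1]

lemma lamB_le_lamB_one (q : ℕ) (h1 : 1 ≤ q) (hqd : q ≤ d) :
    lamB d p q ≤ lamB d p 1 := by
  have e1 := S_split (p := p) (d - q) (d - 1) (by omega)
  have i1 := sum_lb hd hp hassort (d - q) (d - 1) d (by omega) (by omega) le_rfl
  have i2 : p d ≤ p (d - q + 1) := pmono hassort (d - q + 1) d (by omega) le_rfl
  have i3 : (2:ℝ)^(d-q) * p d ≤ 2^(d-q) * p (d - q + 1) :=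
    mul_le_mul_of_nonneg_left i2 (by positivity)
  rw [lamB_one_eq hd hp hassort, lamB, if_neg (by omega)]
  linarith

lemma lamB_pos (q : ℕ) (h1 : 1 ≤ q) (hqd : q ≤ d) : 0 < lamB d p q := by
  have e1 := S_split (p := p) 0 (d - q) (by omega)
  have i1 := sum_lb hd hp hassort 0 (d - q) (d - q) (by omega) le_rfl (by omega)
  have i2 : p (d - q + 1) < p (d - q) := hassort (d - q) (by omega)
  have i3 : (2:ℝ)^(d-q) * p (d - q + 1) < 2^(d-q) * p (d - q) :=
    mul_lt_mul_of_pos_left i2 (by positivity)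
  have i4 : p (d - q) ≤ p 0 := pmono hassort 0 (d - q) (by omega) (by omega)
  rw [lamB, if_neg (by omega)]
  have e2 : ∑ r ∈ Finset.Icc 1 0, (2:ℝ)^(r-1) * p r = 0 := by simp
  have h20 : (2:ℝ)^(0:ℕ) = 1 := by norm_num
  rw [e2] at e1
  linarith [pow_pos (by norm_num : (0:ℝ) < 2) (d - q)]

lemma lamB_one_le_lamB_zero : lamB d p 1 ≤ lamB d p 0 := by
  have e1 := S_split (p := p) (d - 1) d (by omega)
  have e2 : ∑ r ∈ Finset.Ioc (d-1) d, (2:ℝ)^(r-1) * p r = 2^(d-1) * p d := by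
    have h1 : Finset.Ioc (d-1) d = {d} := by
      ext r; simp only [Finset.mem_Ioc, Finset.mem_singleton]; omega
    rw [h1, Finset.sum_singleton]
  have i1 : 0 ≤ (2:ℝ)^(d-1) * p d := by
    have := (hp d le_rfl).1; positivity
  rw [lamB_one_eq hd hp hassort, lamB, if_pos rfl]
  linarith

lemma lamB_zero_pos : 0 < lamB d p 0 := by
  have i1 : 0 < p 0 := by
    have := hassort 0 hd
    have := (hp 1 hd).1
    linarith
  have i2 : 0 ≤ ∑ r ∈ Finset.Icc 1 d, (2:ℝ)^(r-1) * p r := by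
    refine Finset.sum_nonneg fun r hr => ?_
    rw [Finset.mem_Icc] at hr
    have := (hp r hr.2).1
    positivity
  rw [lamB, if_pos rfl]
  linarith

end order

lemma exists_last {d : ℕ} (w : Fin d → Bool) (hw : w ≠ zv d) :
    ∃ ℓ : Fin d, w ℓ = true ∧ ∀ i, ℓ < i → w i = false := by
  have hne : (Finset.univ.filter fun i => w i = true).Nonempty := by
    obtain ⟨h, hq⟩ := Nat.sInf_mem (nonempty_of_ne_zv hw)
    exact ⟨_, Finset.mem_filter.mpr ⟨Finset.mem_univ _, hq⟩⟩
  refine ⟨(Finset.univ.filter fun i => w i = true).max' hne, ?_, ?_⟩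
  · have := (Finset.univ.filter fun i => w i = true).max'_mem hne
    exact (Finset.mem_filter.mp this).2
  · intro i hi
    cases hwi : w i
    · rfl
    · exfalso
      have hmem : i ∈ Finset.univ.filter fun i => w i = true :=
        Finset.mem_filter.mpr ⟨Finset.mem_univ _, hwi⟩
      have := Finset.le_max' _ i hmem
      exact absurd hi (not_lt.mpr this)

lemma lam_classify {d : ℕ} (hd : 1 ≤ d) (p : ℕ → ℝ) (w : Fin d → Bool) (hw : w ≠ zv d) :
    ∃ q, 1 ≤ q ∧ q ≤ d ∧ lam d p w = lamB d p q := by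
  obtain ⟨ℓ, h1, h2⟩ := exists_last w hw
  exact ⟨(ℓ : ℕ) + 1, by omega, by have := ℓ.isLt; omega, lam_eq_lamB hd p w ℓ h1 h2⟩

/-- roots of the characteristic polynomial of P̃ -/
lemma roots_Ptil (n d m : ℕ) (hd : 1 ≤ d) (hm : 0 < m) (p : ℕ → ℝ)
    (hn : n = 2^d * m) (c : Fin n → Fin d → Bool) (hbal : Balanced n d m c) :
    (Ptil n d p c).charpoly.roots
      = Multiset.map (fun w => (m : ℝ) * lam d p w) Finset.univ.val
        + Multiset.replicate (n - 2^d) 0 := by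
  classical
  have hcard : Fintype.card (Fin d → Bool) = 2^d := by
    simp [Fintype.card_fun]
  have hrect := charpoly_rect (Zmat n d c) (Bmat d p * (Zmat n d c)ᵀ)
  have e1 : Zmat n d c * (Bmat d p * (Zmat n d c)ᵀ) = Ptil n d p c := by
    rw [Ptil, Matrix.mul_assoc]
  have e2 : (Bmat d p * (Zmat n d c)ᵀ) * Zmat n d c = (m : ℝ) • Bmat d p := by
    rw [Matrix.mul_assoc, ZtZ c hbal, Matrix.mul_smul, Matrix.mul_one]
  rw [e1, e2, hcard, charpoly_smul_Bmat] at hrect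
  have hKn : 2^d ≤ n := by
    rw [hn]; exact Nat.le_mul_of_pos_right _ hm
  have e3 : (X : ℝ[X])^n = X^(n - 2^d) * X^(2^d) := by
    rw [← pow_add]
    congr 1
    omega
  rw [e3, ← mul_assoc] at hrect
  have hcpoly : (Ptil n d p c).charpoly
      = (∏ w : Fin d → Bool, (X - C ((m : ℝ) * lam d p w))) * X^(n - 2^d) :=
    mul_right_cancel₀ (pow_ne_zero _ X_ne_zero) hrect
  have hprod_ne : (∏ w : Fin d → Bool, (X - C ((m : ℝ) * lam d p w))) ≠ 0 :=
    (monic_prod_of_monic _ _ (fun w _ => monic_X_sub_C _)).ne_zero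
  rw [hcpoly, Polynomial.roots_mul (mul_ne_zero hprod_ne (pow_ne_zero _ X_ne_zero))]
  congr 1
  · rw [Finset.prod_eq_multiset_prod]
    rw [show Multiset.map (fun w => X - C ((m : ℝ) * lam d p w)) Finset.univ.val
        = Multiset.map (fun a => X - C a)
            (Multiset.map (fun w => (m : ℝ) * lam d p w) Finset.univ.val) by
      rw [Multiset.map_map]; rfl]
    exact roots_multiset_prod_X_sub_C _
  · rw [roots_pow, roots_X, Multiset.nsmul_singleton]

end BTSBM
end
section
open Finset Matrix Polynomial
namespace BTSBM

theorem statement15 (d m : ℕ) (hd : 1 ≤ d) (hm : 0 < m)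
    (p : ℕ → ℝ) (hp : ∀ r ≤ d, p r ∈ Set.Icc (0:ℝ) 1)
    -- assortative: p₀ > p₁ > … > p_d
    (hassort : ∀ r < d, p (r + 1) < p r)
    (n : ℕ) (hn : n = 2 ^ d * m)
    (c : Fin n → Fin d → Bool) (hbal : Balanced n d m c)
    -- scaling parametrization (p₀, …, p_d) = ρ_n (1, a₁, …, a_d)
    (ρ : ℝ) (a : ℕ → ℝ) (hρ0 : 0 < ρ) (hρ1 : ρ ≤ 1)
    (hpa : ∀ r ≤ d, p r = ρ * a r) (ha0 : a 0 = 1) :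
    -- m λ_{d,1} is the eigenvalue of P̃ of second largest absolute value, and
    IsSecondAbsEigenval (Ptil n d p c) ((m : ℝ) * lamB d p 1)
    -- λ₂ = n ρ_n (1 + Σ_{i=1}^{d−1} 2^{i−1} a_i − 2^{d−1} a_d)/K
    ∧ (m : ℝ) * lamB d p 1
        = (n : ℝ) * ρ * (1 + (∑ i ∈ Finset.Icc 1 (d - 1), 2 ^ (i - 1) * a i)
            - 2 ^ (d - 1) * a d) / (2 ^ d : ℝ)
    -- = n ρ_n ((1 − a_d) + Σ_{i=1}^{d−1} 2^{i−1}(a_i − a_d))/K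
    ∧ (m : ℝ) * lamB d p 1
        = (n : ℝ) * ρ * ((1 - a d)
            + ∑ i ∈ Finset.Icc 1 (d - 1), 2 ^ (i - 1) * (a i - a d)) / (2 ^ d : ℝ)
    -- ≥ n ρ_n (a_{d−1} − a_d)/2 ≥ n ρ_n η_d
    ∧ (n : ℝ) * ρ * (a (d - 1) - a d) / 2 ≤ (m : ℝ) * lamB d p 1
    ∧ (n : ℝ) * ρ * min (a d) ((a (d - 1) - a d) / 2)
        ≤ (n : ℝ) * ρ * (a (d - 1) - a d) / 2 := by
  classical
  have hm0 : (0:ℝ) ≤ (m : ℝ) := Nat.cast_nonneg m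
  set f : (Fin d → Bool) → ℝ := fun w => (m:ℝ) * lam d p w with hf
  have hroots := roots_Ptil n d m hd hm p hn c hbal
  have hB1pos := lamB_pos hd hp hassort 1 le_rfl hd
  have hB0pos := lamB_zero_pos hd hp hassort
  have hB10 := lamB_one_le_lamB_zero hd hp hassort
  have habs1 : ∀ w : Fin d → Bool, w ≠ zv d → |f w| ≤ (m:ℝ) * lamB d p 1 := by
    intro w hw
    obtain ⟨q, hq1, hqd, he⟩ := lam_classify hd p w hw
    have h1 := lamB_pos hd hp hassort q hq1 hqd
    have h2 := lamB_le_lamB_one hd hp hassort q hq1 hqd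
    rw [hf]
    simp only []
    rw [he, abs_of_nonneg (mul_nonneg hm0 h1.le)]
    exact mul_le_mul_of_nonneg_left h2 hm0
  have habs0 : ∀ w : Fin d → Bool, |f w| ≤ (m:ℝ) * lamB d p 0 := by
    intro w
    by_cases hw : w = zv d
    · subst hw
      rw [hf]
      simp only []
      rw [lam_zv hd, abs_of_nonneg (mul_nonneg hm0 hB0pos.le)]
    · exact le_trans (habs1 w hw) (mul_le_mul_of_nonneg_left hB10 hm0)
  have hmu1 : f (zv d) = (m:ℝ) * lamB d p 0 := by
    rw [hf]; simp only []; rw [lam_zv hd]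
  have hsplit : (Finset.univ.val : Multiset (Fin d → Bool))
      = zv d ::ₘ (Finset.univ.val.erase (zv d)) :=
    (Multiset.cons_erase (Finset.mem_val.mpr (Finset.mem_univ (zv d)))).symm
  set rest : Multiset ℝ := Multiset.map f (Finset.univ.val.erase (zv d))
      + Multiset.replicate (n - 2^d) 0 with hrest
  have hroots2 : (Ptil n d p c).charpoly.roots = f (zv d) ::ₘ rest := by
    rw [hroots, hrest]
    conv_lhs => rw [hsplit]
    rw [Multiset.map_cons, Multiset.cons_add]
  -- the special character w₁
  set w₁ : Fin d → Bool := fun i => decide ((i:ℕ) = 0) with hw₁def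
  have hw1ne : w₁ ≠ zv d := by
    intro hc
    have := congrFun hc ⟨0, hd⟩
    simp [hw₁def, zv] at this
  have hfw1 : f w₁ = (m:ℝ) * lamB d p 1 := by
    rw [hf]
    simp only []
    congr 1
    have h := lam_eq_lamB hd p w₁ ⟨0, hd⟩ (by simp [hw₁def])
      (fun i hi => by
        have hlt := Fin.lt_iff_val_lt_val.mp hi
        simp only [hw₁def, decide_eq_false_iff_not]
        omega)
    simpa using h
  have hw1mem : w₁ ∈ Finset.univ.val.erase (zv d) :=
    (Multiset.Nodup.mem_erase_iff Finset.univ.nodup).mpr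
      ⟨hw1ne, Finset.mem_val.mpr (Finset.mem_univ _)⟩
  have habs1' : |(m:ℝ) * lamB d p 1| = (m:ℝ) * lamB d p 1 :=
    abs_of_nonneg (mul_nonneg hm0 hB1pos.le)
  constructor
  · -- IsSecondAbsEigenval
    refine ⟨f (zv d), ?_, ?_, ?_, ?_⟩
    · rw [hroots2]; exact Multiset.mem_cons_self _ _
    · intro ν hν
      rw [hroots] at hν
      have habsmu : |f (zv d)| = (m:ℝ) * lamB d p 0 := by
        rw [hmu1, abs_of_nonneg (mul_nonneg hm0 hB0pos.le)]
      rcases Multiset.mem_add.mp hν with h | h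
      · obtain ⟨w, -, rfl⟩ := Multiset.mem_map.mp h
        rw [habsmu]; exact habs0 w
      · rw [Multiset.eq_of_mem_replicate h]
        rw [habsmu]
        simpa using mul_nonneg hm0 hB0pos.le
    · rw [hroots2, Multiset.erase_cons_head, hrest]
      refine Multiset.mem_add.mpr (Or.inl ?_)
      rw [← hfw1]
      exact Multiset.mem_map_of_mem f hw1mem
    · intro ν hν
      rw [hroots2, Multiset.erase_cons_head, hrest] at hν
      rcases Multiset.mem_add.mp hν with h | h
      · obtain ⟨w, hwmem, rfl⟩ := Multiset.mem_map.mp h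
        have hwne : w ≠ zv d :=
          ((Multiset.Nodup.mem_erase_iff Finset.univ.nodup).mp hwmem).1
        rw [habs1']
        exact habs1 w hwne
      · rw [Multiset.eq_of_mem_replicate h, habs1']
        simpa using mul_nonneg hm0 hB1pos.le
  -- arithmetic identities
  have hpa0 : p 0 = ρ := by rw [hpa 0 (by omega), ha0, mul_one]
  have hSsub : ∑ r ∈ Finset.Icc 1 (d-1), (2:ℝ)^(r-1) * p r
      = ρ * ∑ i ∈ Finset.Icc 1 (d-1), (2:ℝ)^(i-1) * a i := by
    rw [Finset.mul_sum]
    refine Finset.sum_congr rfl fun r hr => ?_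
    rw [Finset.mem_Icc] at hr
    rw [hpa r (by omega)]
    ring
  have hlam1 : (m:ℝ) * lamB d p 1 = (m:ℝ) * ρ *
      (1 + (∑ i ∈ Finset.Icc 1 (d-1), (2:ℝ)^(i-1) * a i) - 2^(d-1) * a d) := by
    rw [lamB_one_eq hd hp hassort, hpa0, hSsub, hpa d le_rfl]
    ring
  have hcast : (n:ℝ) = 2^d * (m:ℝ) := by rw [hn]; push_cast; ring
  have h2d : ((2:ℝ)^d) ≠ 0 := by positivity
  refine ⟨?_, ?_, ?_, ?_⟩
  · rw [hlam1, hcast]; field_simp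
  · have hgeo : ∑ i ∈ Finset.Icc 1 (d-1), (2:ℝ)^(i-1) = 2^(d-1) - 1 := by
      rw [Icc_one_eq_Ioc, geom_Ioc (d-1) 0 (by omega)]
      norm_num
    have hT : (1 - a d) + ∑ i ∈ Finset.Icc 1 (d-1), (2:ℝ)^(i-1) * (a i - a d)
        = 1 + (∑ i ∈ Finset.Icc 1 (d-1), (2:ℝ)^(i-1) * a i) - 2^(d-1) * a d := by
      have hsub : ∑ i ∈ Finset.Icc 1 (d-1), (2:ℝ)^(i-1) * (a i - a d)
          = (∑ i ∈ Finset.Icc 1 (d-1), (2:ℝ)^(i-1) * a i)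
            - (∑ i ∈ Finset.Icc 1 (d-1), (2:ℝ)^(i-1)) * a d := by
        rw [Finset.sum_mul, ← Finset.sum_sub_distrib]
        exact Finset.sum_congr rfl fun i _ => by ring
      rw [hsub, hgeo]; ring
    rw [hlam1, hcast, hT]; field_simp
  · have hlb : (2:ℝ)^(d-1) * (p (d-1) - p d) ≤ lamB d p 1 := by
      have i1 := sum_lb hd hp hassort 0 (d-1) (d-1) (by omega) le_rfl (by omega)
      have i4 : p (d-1) ≤ p 0 := pmono hassort 0 (d-1) (by omega) (by omega)
      rw [lamB_one_eq hd hp hassort, Icc_one_eq_Ioc]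
      have h20 : (2:ℝ)^(0:ℕ) = 1 := by norm_num
      rw [h20] at i1
      linarith
    have e4 : (n:ℝ) * ρ * (a (d-1) - a d)/2 = (m:ℝ) * ((2:ℝ)^(d-1) * (p (d-1) - p d)) := by
      rw [hpa (d-1) (by omega), hpa d le_rfl, hcast]
      have h2 : (2:ℝ)^d = 2 * 2^(d-1) := by
        conv_lhs => rw [show d = d - 1 + 1 by omega]
        rw [pow_succ']
      rw [h2]; ring
    rw [e4]
    exact mul_le_mul_of_nonneg_left hlb hm0
  · have h5 : min (a d) ((a (d-1) - a d)/2) ≤ (a (d-1) - a d)/2 := min_le_right _ _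
    have hnρ : (0:ℝ) ≤ (n:ℝ) * ρ := mul_nonneg (Nat.cast_nonneg n) hρ0.le
    calc (n:ℝ) * ρ * min (a d) ((a (d-1) - a d)/2)
        ≤ (n:ℝ) * ρ * ((a (d-1) - a d)/2) := mul_le_mul_of_nonneg_left h5 hnρ
      _ = (n:ℝ) * ρ * (a (d-1) - a d)/2 := by ring

end BTSBM
end
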